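/- Let d ≥ 2 be an integer and α ∈ (0,2). For x ∈ ℝ^d with |x| ≠ 1 define j(x) = 𝒜 ∫_{ℝ^d} (𝟙_{B₁}(x) − 𝟙_{B₁}(x−y)) |y|^{−d−α} dy, where 𝟙_{B₁} is the indicator of the unit ball B₁ centered at the origin (the integral converges absolutely for |x| ≠ 1). Then j depends only on r = |x|; j(r) > 0 for r ∈ (0,1) and j(r) < 0 for r ∈ (1,∞); and j is an increasing function of r on (0,1) and on (1,∞). -/

import Mathlib

/-!
For `|x| < 1` the integrand vanishes unless `x - y` leaves the unit ball, so
`j(x) = 𝒜 ∫_{|z| ≥ 1} |x - z|^{-d-α} dz > 0`; for `|x| > 1` it vanishes unless `x - y` lies in the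
ball, so `j(x) = -𝒜 ∫_{|z| < 1} |x - z|^{-d-α} dz < 0`. Rotation invariance makes `j` radial.

For monotonicity compare the kernels centred at `r v` and `s v`, `|v| = 1`. The reflection `σ`
in the hyperplane bisecting them exchanges the two kernels, so their difference `g` satisfies
`g ∘ σ = -g`. On the relevant domain (the ball if `r, s > 1`, its complement if `r, s < 1`) `σ`
maps the part where `g < 0` into the part where `g > 0`, so the integral of `g` is that of the
nonnegative `g` over what is left, a set containing a nonempty open set on which `g > 0`.
-/

open MeasureTheory Real

/-- The normalizing constant `𝒜(d,α)` of the fractional Laplacian. -/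
noncomputable def fracLapConst (d : ℕ) (α : ℝ) : ℝ :=
  2 ^ α * Gamma (((d : ℝ) + α) / 2) / (π ^ ((d : ℝ) / 2) * |Gamma (-α / 2)|)

open Metric Set
open scoped RealInnerProductSpace

theorem fracLapConst_pos (d : ℕ) {α : ℝ} (hα : α ∈ Ioo (0 : ℝ) 2) : 0 < fracLapConst d α := by
  obtain ⟨hα0, hα2⟩ := hα
  have hΓ : Gamma (-α / 2) ≠ 0 := Gamma_ne_zero fun m hm => by
    have hm01 : (0 : ℝ) < m ∧ (m : ℝ) < 1 := ⟨by linarith, by linarith⟩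
    norm_cast at hm01
    omega
  exact div_pos (mul_pos (rpow_pos_of_pos two_pos _) (Gamma_pos_of_pos (by positivity)))
    (mul_pos (rpow_pos_of_pos pi_pos _) (abs_pos.2 hΓ))

theorem setIntegral_pos_of_antisymm {α : Type*} [MeasurableSpace α] {μ : Measure α} {σ : α → α}
    (hσ : MeasurePreserving σ μ μ) (hσe : MeasurableEmbedding σ) {g : α → ℝ}
    (hg : ∀ z, g (σ z) = -g z) {A S : Set α} (hA : MeasurableSet A) (hS : MeasurableSet S)
    (hgA : IntegrableOn g A μ) (hσA : σ ⁻¹' (A \ S) ⊆ A ∩ S) (hg0 : ∀ z ∈ A ∩ S, 0 ≤ g z)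
    (hpos : 0 < μ {z | z ∈ A ∩ S ∧ σ z ∉ A ∧ 0 < g z}) :
    0 < ∫ z in A, g z ∂μ := by
  set P := σ ⁻¹' (A \ S)
  have hP : MeasurableSet P := hσ.measurable (hA.diff hS)
  have hflip : ∫ z in A \ S, g z ∂μ = -∫ z in P, g z ∂μ := by
    rw [← hσ.setIntegral_preimage_emb hσe g (A \ S), ← integral_neg]
    simp_rw [hg]
    rfl
  have hsplit : ∫ z in A ∩ S, g z ∂μ = ∫ z in P, g z ∂μ + ∫ z in (A ∩ S) \ P, g z ∂μ := by
    rw [← integral_inter_add_sdiff hP (hgA.mono_set inter_subset_left), inter_eq_right.2 hσA]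
  have hrest : ∫ z in A, g z ∂μ = ∫ z in (A ∩ S) \ P, g z ∂μ := by
    rw [← integral_inter_add_sdiff hS hgA, hflip, hsplit]
    ring
  rw [hrest, setIntegral_pos_iff_support_of_nonneg_ae
    ((ae_restrict_iff' ((hA.inter hS).diff hP)).2 (ae_of_all _ fun z hz => hg0 z hz.1))
    (hgA.mono_set (sdiff_subset.trans inter_subset_left))]
  refine hpos.trans_le (measure_mono ?_)
  rintro z ⟨hzAS, hσz, hz⟩
  exact ⟨hz.ne', hzAS, fun h => hσz h.1⟩

section

variable {E : Type*} [NormedAddCommGroup E]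

/-- The integrand of `(−Δ)^{α/2} 𝟙_{B₁}(x) / 𝒜` at `y`, for the exponent `p = −d − α`. -/
noncomputable def fracLapBallIntegrand (p : ℝ) (x y : E) : ℝ :=
  ((ball (0 : E) 1).indicator (fun _ => (1 : ℝ)) x -
    (ball (0 : E) 1).indicator (fun _ => (1 : ℝ)) (x - y)) * ‖y‖ ^ p

theorem fracLapBallIntegrand_of_norm_lt (p : ℝ) {x : E} (hx : ‖x‖ < 1) (y : E) :
    fracLapBallIntegrand p x y = (ball (0 : E) 1)ᶜ.indicator (fun z => ‖x - z‖ ^ p) (x - y) := by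
  by_cases hy : x - y ∈ ball (0 : E) 1 <;>
    simp [fracLapBallIntegrand, hy, mem_ball_zero_iff.2 hx]

theorem fracLapBallIntegrand_of_one_lt_norm (p : ℝ) {x : E} (hx : 1 < ‖x‖) (y : E) :
    fracLapBallIntegrand p x y = -(ball (0 : E) 1).indicator (fun z => ‖x - z‖ ^ p) (x - y) := by
  by_cases hy : x - y ∈ ball (0 : E) 1 <;>
    simp [fracLapBallIntegrand, hy, hx.le]

end

section

variable {E : Type*} [NormedAddCommGroup E] [NormedSpace ℝ E] {v : E}

theorem norm_smul_of_norm_eq_one (hv : ‖v‖ = 1) {a : ℝ} (ha : 0 ≤ a) : ‖a • v‖ = a := by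
  rw [norm_smul_of_nonneg ha, hv, mul_one]

theorem lt_of_norm_lt_of_radial {f : E → ℝ} {I : Set ℝ}
    (hrad : ∀ x x' : E, ‖x‖ = ‖x'‖ → f x = f x')
    (hray : ∀ v : E, ‖v‖ = 1 → ∀ r ∈ I, ∀ s ∈ I, r < s → f (r • v) < f (s • v))
    {x y : E} (hx : ‖x‖ ∈ I) (hy : ‖y‖ ∈ I) (hxy : ‖x‖ < ‖y‖) : f x < f y := by
  have hv := NormedSpace.norm_normalize_eq_one_iff.2 (norm_pos_iff.1 ((norm_nonneg x).trans_lt hxy))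
  rw [hrad x _ (norm_smul_of_norm_eq_one hv (norm_nonneg x)).symm]
  conv_rhs => rw [← NormedSpace.norm_smul_normalize y]
  exact hray _ hv _ hx _ hy hxy

end

section

variable {E : Type*} [NormedAddCommGroup E] [InnerProductSpace ℝ E] {v : E}

/-- For `‖v‖ = 1`, the reflection in the hyperplane `2 ⟪z, v⟫ = t`. -/
def hyperplaneReflection (v : E) (t : ℝ) (z : E) : E := z + (t - 2 * ⟪z, v⟫) • v

theorem hyperplaneReflection_eq (hv : ‖v‖ = 1) (t : ℝ) :
    hyperplaneReflection v t = fun z => (ℝ ∙ v)ᗮ.reflection z + t • v := by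
  funext z
  rw [hyperplaneReflection, Submodule.reflection_orthogonal_apply,
    Submodule.reflection_singleton_apply, hv, real_inner_comm]
  simp only [RCLike.ofReal_real_eq_id, id, one_pow, div_one]
  module

theorem continuous_hyperplaneReflection (v : E) (t : ℝ) :
    Continuous (hyperplaneReflection v t) := by
  unfold hyperplaneReflection
  fun_prop

theorem hyperplaneReflection_smul (hv : ‖v‖ = 1) (t a : ℝ) :
    hyperplaneReflection v t (a • v) = (t - a) • v := by
  rw [hyperplaneReflection, real_inner_smul_left, real_inner_self_eq_norm_sq, hv]
  module

theorem inner_hyperplaneReflection (hv : ‖v‖ = 1) (t : ℝ) (z : E) :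
    ⟪hyperplaneReflection v t z, v⟫ = t - ⟪z, v⟫ := by
  rw [hyperplaneReflection, inner_add_left, real_inner_smul_left, real_inner_self_eq_norm_sq, hv]
  ring

theorem norm_hyperplaneReflection_sq (hv : ‖v‖ = 1) (t : ℝ) (z : E) :
    ‖hyperplaneReflection v t z‖ ^ 2 = ‖z‖ ^ 2 + t * (t - 2 * ⟪z, v⟫) := by
  rw [hyperplaneReflection, norm_add_sq_real, real_inner_smul_right, norm_smul, hv, mul_one,
    Real.norm_eq_abs, sq_abs]
  ring

theorem norm_lt_norm_hyperplaneReflection_iff (hv : ‖v‖ = 1) {t : ℝ} (ht : 0 < t) (z : E) :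
    ‖z‖ < ‖hyperplaneReflection v t z‖ ↔ 2 * ⟪z, v⟫ < t := by
  rw [← sq_lt_sq₀ (norm_nonneg _) (norm_nonneg _), norm_hyperplaneReflection_sq hv,
    lt_add_iff_pos_right, mul_pos_iff_of_pos_left ht, sub_pos]

theorem norm_hyperplaneReflection_lt_norm_iff (hv : ‖v‖ = 1) {t : ℝ} (ht : 0 < t) (z : E) :
    ‖hyperplaneReflection v t z‖ < ‖z‖ ↔ t < 2 * ⟪z, v⟫ := by
  rw [← sq_lt_sq₀ (norm_nonneg _) (norm_nonneg _), norm_hyperplaneReflection_sq hv,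
    add_lt_iff_neg_left]
  constructor <;> intro h <;> nlinarith

theorem norm_smul_sub_hyperplaneReflection (hv : ‖v‖ = 1) {a b t : ℝ} (hab : a + b = t) (z : E) :
    ‖a • v - hyperplaneReflection v t z‖ = ‖b • v - z‖ := by
  have h : a • v - hyperplaneReflection v t z = (ℝ ∙ v)ᗮ.reflection (b • v - z) := by
    rw [hyperplaneReflection_eq hv, map_sub, map_smul,
      Submodule.reflection_orthogonalComplement_singleton_eq_neg, ← hab]
    module
  rw [h, LinearIsometryEquiv.norm_map]

theorem norm_smul_sub_sq (hv : ‖v‖ = 1) (a : ℝ) (z : E) :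
    ‖a • v - z‖ ^ 2 = a ^ 2 - 2 * a * ⟪z, v⟫ + ‖z‖ ^ 2 := by
  rw [norm_sub_sq_real, norm_smul, hv, mul_one, Real.norm_eq_abs, sq_abs, real_inner_smul_left,
    real_inner_comm]
  ring

theorem norm_smul_sub_lt_norm_smul_sub_iff (hv : ‖v‖ = 1) {a b : ℝ} (hab : a < b) (z : E) :
    ‖a • v - z‖ < ‖b • v - z‖ ↔ 2 * ⟪z, v⟫ < a + b := by
  rw [← sq_lt_sq₀ (norm_nonneg _) (norm_nonneg _), norm_smul_sub_sq hv, norm_smul_sub_sq hv]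
  constructor <;> intro h <;> nlinarith

theorem norm_smul_sub_le_norm_smul_sub_iff (hv : ‖v‖ = 1) {a b : ℝ} (hab : a < b) (z : E) :
    ‖a • v - z‖ ≤ ‖b • v - z‖ ↔ 2 * ⟪z, v⟫ ≤ a + b := by
  rw [← sq_le_sq₀ (norm_nonneg _) (norm_nonneg _), norm_smul_sub_sq hv, norm_smul_sub_sq hv]
  constructor <;> intro h <;> nlinarith

theorem norm_smul_sub_lt_norm_smul_sub_iff' (hv : ‖v‖ = 1) {a b : ℝ} (hab : a < b) (z : E) :
    ‖b • v - z‖ < ‖a • v - z‖ ↔ a + b < 2 * ⟪z, v⟫ := by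
  rw [← sq_lt_sq₀ (norm_nonneg _) (norm_nonneg _), norm_smul_sub_sq hv, norm_smul_sub_sq hv]
  constructor <;> intro h <;> nlinarith

theorem norm_smul_sub_le_norm_smul_sub_iff' (hv : ‖v‖ = 1) {a b : ℝ} (hab : a < b) (z : E) :
    ‖b • v - z‖ ≤ ‖a • v - z‖ ↔ a + b ≤ 2 * ⟪z, v⟫ := by
  rw [← sq_le_sq₀ (norm_nonneg _) (norm_nonneg _), norm_smul_sub_sq hv, norm_smul_sub_sq hv]
  constructor <;> intro h <;> nlinarith

theorem preimage_hyperplaneReflection_ball_diff_subset (hv : ‖v‖ = 1) {t : ℝ} (ht : 0 < t) :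
    hyperplaneReflection v t ⁻¹' (ball 0 1 \ {z | 2 * ⟪z, v⟫ ≤ t}) ⊆
      ball 0 1 ∩ {z | 2 * ⟪z, v⟫ ≤ t} := by
  rintro z ⟨hσz, hσS⟩
  have h : 2 * ⟪z, v⟫ < t := by
    rw [mem_ofPred_eq, inner_hyperplaneReflection hv, not_le] at hσS
    linarith
  exact ⟨mem_ball_zero_iff.2 (((norm_lt_norm_hyperplaneReflection_iff hv ht z).2 h).trans
    (mem_ball_zero_iff.1 hσz)), h.le⟩

theorem preimage_hyperplaneReflection_compl_ball_diff_subset (hv : ‖v‖ = 1) {t : ℝ} (ht : 0 < t) :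
    hyperplaneReflection v t ⁻¹' ((ball 0 1)ᶜ \ {z | t ≤ 2 * ⟪z, v⟫}) ⊆
      (ball 0 1)ᶜ ∩ {z | t ≤ 2 * ⟪z, v⟫} := by
  rintro z ⟨hσz, hσS⟩
  have h : t < 2 * ⟪z, v⟫ := by
    rw [mem_ofPred_eq, inner_hyperplaneReflection hv, not_le] at hσS
    linarith
  have hσz : 1 ≤ ‖hyperplaneReflection v t z‖ := by simpa using hσz
  exact ⟨by simpa using hσz.trans ((norm_hyperplaneReflection_lt_norm_iff hv ht z).2 h).le, h.le⟩

variable [MeasurableSpace E] [BorelSpace E]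

theorem measurableEmbedding_hyperplaneReflection (hv : ‖v‖ = 1) (t : ℝ) :
    MeasurableEmbedding (hyperplaneReflection v t) := by
  rw [hyperplaneReflection_eq hv]
  exact ((Submodule.reflection _).toHomeomorph.trans
    (Homeomorph.addRight (t • v))).measurableEmbedding

variable [FiniteDimensional ℝ E]

theorem measurePreserving_hyperplaneReflection (hv : ‖v‖ = 1) (t : ℝ) :
    MeasurePreserving (hyperplaneReflection v t) := by
  rw [hyperplaneReflection_eq hv]
  exact (measurePreserving_add_right volume (t • v)).comp (Submodule.reflection _).measurePreserving

theorem integrableOn_compl_ball_rpow_norm_sub {p : ℝ} (hp : p < -Module.finrank ℝ E) {x : E}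
    (hx : ‖x‖ < 1) : IntegrableOn (fun z => ‖x - z‖ ^ p) (ball (0 : E) 1)ᶜ := by
  set c := (1 - ‖x‖) / 2
  have hc : 0 < c := by simp only [c]; linarith
  have hp0 : p ≤ 0 := by linarith [(Module.finrank ℝ E).cast_nonneg (α := ℝ)]
  have hbound : Integrable (fun z : E => c ^ p * (1 + ‖z‖) ^ p) := by
    have h := integrable_one_add_norm (E := E) (μ := volume) (r := -p) (by linarith)
    rw [neg_neg] at h
    exact h.const_mul _
  refine hbound.integrableOn.mono'
    (by fun_prop : Measurable fun z => ‖x - z‖ ^ p).aestronglyMeasurable ?_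
  refine (ae_restrict_iff' measurableSet_ball.compl).2 (ae_of_all _ fun z hz => ?_)
  have hz : 1 ≤ ‖z‖ := by simpa using hz
  have hdist : c * (1 + ‖z‖) ≤ ‖x - z‖ := by
    have := norm_sub_norm_le z x
    rw [norm_sub_rev] at this
    simp only [c]
    nlinarith [mul_nonneg (sub_nonneg.2 hz) (norm_nonneg x)]
  rw [norm_of_nonneg (by positivity), ← mul_rpow hc.le (by positivity)]
  exact rpow_le_rpow_of_nonpos (by positivity) hdist hp0

theorem integrableOn_ball_rpow_norm_sub (p : ℝ) {x : E} (hx : 1 < ‖x‖) :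
    IntegrableOn (fun z => ‖x - z‖ ^ p) (ball (0 : E) 1) := by
  refine (ContinuousOn.integrableOn_compact (isCompact_closedBall 0 1) ?_).mono_set
    ball_subset_closedBall
  refine (continuous_const.sub continuous_id).norm.continuousOn.rpow_const fun z hz => Or.inl ?_
  have := norm_sub_norm_le x z
  have : ‖z‖ ≤ 1 := mem_closedBall_zero_iff.1 hz
  exact (by linarith : 0 < ‖x - z‖).ne'

theorem setIntegral_compl_ball_rpow_norm_sub_pos [Nontrivial E] {p : ℝ}
    (hp : p < -Module.finrank ℝ E) {x : E} (hx : ‖x‖ < 1) :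
    0 < ∫ z in (ball (0 : E) 1)ᶜ, ‖x - z‖ ^ p := by
  refine (setIntegral_pos_iff_support_of_nonneg_ae (ae_of_all _ fun z => by positivity)
    (integrableOn_compl_ball_rpow_norm_sub hp hx)).2 ?_
  obtain ⟨z₀, hz₀⟩ := exists_norm_eq E zero_le_two
  refine ((isOpen_lt continuous_const continuous_norm).measure_pos volume
    ⟨z₀, show (1 : ℝ) < ‖z₀‖ by rw [hz₀]; norm_num⟩).trans_le (measure_mono fun z hz => ⟨?_, ?_⟩)
  · have := norm_sub_norm_le z x
    have : (1 : ℝ) < ‖z‖ := hz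
    exact (rpow_pos_of_pos (by rw [norm_sub_rev]; linarith) p).ne'
  · simpa using (show (1 : ℝ) < ‖z‖ from hz).le

theorem setIntegral_ball_rpow_norm_sub_pos (p : ℝ) {x : E} (hx : 1 < ‖x‖) :
    0 < ∫ z in ball (0 : E) 1, ‖x - z‖ ^ p := by
  refine (setIntegral_pos_iff_support_of_nonneg_ae (ae_of_all _ fun z => by positivity)
    (integrableOn_ball_rpow_norm_sub p hx)).2 ?_
  refine (measure_ball_pos volume (0 : E) one_pos).trans_le (measure_mono fun z hz => ⟨?_, hz⟩)
  have := norm_sub_norm_le x z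
  have := mem_ball_zero_iff.1 hz
  exact (rpow_pos_of_pos (by linarith) p).ne'

theorem setIntegral_ball_rpow_norm_smul_sub_lt {p : ℝ} (hp : p < 0) (hv : ‖v‖ = 1) {r s : ℝ}
    (hr : 1 < r) (hrs : r < s) :
    ∫ z in ball (0 : E) 1, ‖s • v - z‖ ^ p < ∫ z in ball (0 : E) 1, ‖r • v - z‖ ^ p := by
  set σ := hyperplaneReflection v (r + s)
  have ht : 0 < r + s := by linarith
  have hr_pos : ∀ z ∈ ball (0 : E) 1, 0 < ‖r • v - z‖ := fun z hz => by
    have := norm_sub_norm_le (r • v) z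
    rw [norm_smul_of_norm_eq_one hv (by linarith)] at this
    linarith [mem_ball_zero_iff.1 hz]
  have hIr := integrableOn_ball_rpow_norm_sub p (x := r • v)
    (by rwa [norm_smul_of_norm_eq_one hv (by linarith)])
  have hIs := integrableOn_ball_rpow_norm_sub p (x := s • v)
    (by rw [norm_smul_of_norm_eq_one hv (by linarith)]; linarith)
  rw [← sub_pos, ← integral_sub hIr hIs]
  refine setIntegral_pos_of_antisymm (measurePreserving_hyperplaneReflection hv (r + s))
    (measurableEmbedding_hyperplaneReflection hv (r + s)) (fun z => ?_) measurableSet_ball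
    (measurableSet_le (by fun_prop) measurable_const) (hIr.sub hIs)
    (preimage_hyperplaneReflection_ball_diff_subset hv ht) (fun z ⟨hz, hS⟩ => ?_) ?_
  · rw [norm_smul_sub_hyperplaneReflection hv rfl,
      norm_smul_sub_hyperplaneReflection hv (add_comm s r)]
    ring
  · exact sub_nonneg.2 (rpow_le_rpow_of_nonpos (hr_pos z hz)
      ((norm_smul_sub_le_norm_smul_sub_iff hv hrs z).2 hS) hp.le)
  have hU : IsOpen (ball (0 : E) 1 ∩ σ ⁻¹' (closedBall 0 1)ᶜ) :=
    isOpen_ball.inter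
      (isClosed_closedBall.isOpen_compl.preimage (continuous_hyperplaneReflection _ _))
  have h0 : σ 0 = (r + s) • v := by simp [σ, hyperplaneReflection]
  refine (hU.measure_pos volume ⟨0, mem_ball_self one_pos, ?_⟩).trans_le (measure_mono ?_)
  · rw [mem_preimage, h0, mem_compl_iff, mem_closedBall_zero_iff,
      norm_smul_of_norm_eq_one hv ht.le, not_le]
    linarith
  rintro z ⟨hz, hσz⟩
  have hσz : 1 < ‖σ z‖ := by simpa using hσz
  have h := (norm_lt_norm_hyperplaneReflection_iff hv ht z).1 ((mem_ball_zero_iff.1 hz).trans hσz)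
  refine ⟨⟨hz, h.le⟩, fun h' => lt_asymm hσz (mem_ball_zero_iff.1 h'), sub_pos.2 ?_⟩
  exact rpow_lt_rpow_of_neg (hr_pos z hz) ((norm_smul_sub_lt_norm_smul_sub_iff hv hrs z).2 h) hp

theorem setIntegral_compl_ball_rpow_norm_smul_sub_lt {p : ℝ} (hp : p < -Module.finrank ℝ E)
    (hv : ‖v‖ = 1) {r s : ℝ} (hr : 0 ≤ r) (hrs : r < s) (hs : s < 1) :
    ∫ z in (ball (0 : E) 1)ᶜ, ‖r • v - z‖ ^ p < ∫ z in (ball (0 : E) 1)ᶜ, ‖s • v - z‖ ^ p := by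
  set σ := hyperplaneReflection v (r + s)
  have ht : 0 < r + s := by linarith
  have hp0 : p < 0 := by linarith [(Module.finrank ℝ E).cast_nonneg (α := ℝ)]
  have hs_pos : ∀ z ∈ (ball (0 : E) 1)ᶜ, 0 < ‖s • v - z‖ := fun z hz => by
    have := norm_sub_norm_le z (s • v)
    rw [norm_smul_of_norm_eq_one hv (by linarith), norm_sub_rev] at this
    linarith [show 1 ≤ ‖z‖ by simpa using hz]
  have hIr := integrableOn_compl_ball_rpow_norm_sub hp (x := r • v)
    (by rw [norm_smul_of_norm_eq_one hv hr]; linarith)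
  have hIs := integrableOn_compl_ball_rpow_norm_sub hp (x := s • v)
    (by rwa [norm_smul_of_norm_eq_one hv (by linarith)])
  rw [← sub_pos, ← integral_sub hIs hIr]
  refine setIntegral_pos_of_antisymm (measurePreserving_hyperplaneReflection hv (r + s))
    (measurableEmbedding_hyperplaneReflection hv (r + s)) (fun z => ?_) measurableSet_ball.compl
    (measurableSet_le measurable_const (by fun_prop)) (hIs.sub hIr)
    (preimage_hyperplaneReflection_compl_ball_diff_subset hv ht) (fun z ⟨hz, hS⟩ => ?_) ?_
  · rw [norm_smul_sub_hyperplaneReflection hv (add_comm s r),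
      norm_smul_sub_hyperplaneReflection hv rfl]
    ring
  · exact sub_nonneg.2 (rpow_le_rpow_of_nonpos (hs_pos z hz)
      ((norm_smul_sub_le_norm_smul_sub_iff' hv hrs z).2 hS) hp0.le)
  have hU : IsOpen ({z : E | 1 < ‖z‖} ∩ σ ⁻¹' ball 0 1) :=
    (isOpen_lt continuous_const continuous_norm).inter
      (isOpen_ball.preimage (continuous_hyperplaneReflection _ _))
  refine (hU.measure_pos volume ⟨(1 + (r + s) / 2) • v, ?_, ?_⟩).trans_le (measure_mono ?_)
  · rw [mem_ofPred_eq, norm_smul_of_norm_eq_one hv (by linarith)]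
    linarith
  · rw [mem_preimage, show σ _ = _ from hyperplaneReflection_smul hv _ _, mem_ball_zero_iff,
      norm_smul, hv, mul_one, Real.norm_eq_abs, abs_lt]
    constructor <;> linarith
  rintro z ⟨hz, hσz⟩
  have hz : 1 < ‖z‖ := hz
  have hσz := mem_ball_zero_iff.1 hσz
  have h := (norm_hyperplaneReflection_lt_norm_iff hv ht z).1 (hσz.trans hz)
  have hzC : z ∈ (ball (0 : E) 1)ᶜ := by simpa using hz.le
  refine ⟨⟨hzC, h.le⟩, fun h' => (show (1 : ℝ) ≤ ‖σ z‖ by simpa using h').not_gt hσz, sub_pos.2 ?_⟩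
  exact rpow_lt_rpow_of_neg (hs_pos z hzC) ((norm_smul_sub_lt_norm_smul_sub_iff' hv hrs z).2 h) hp0

noncomputable def fracLapBall (p : ℝ) (x : E) : ℝ := ∫ y, fracLapBallIntegrand p x y

theorem integrable_fracLapBallIntegrand {p : ℝ} (hp : p < -Module.finrank ℝ E) {x : E}
    (hx : ‖x‖ ≠ 1) : Integrable (fracLapBallIntegrand p x) := by
  rcases hx.lt_or_gt with hx | hx
  · rw [funext (fracLapBallIntegrand_of_norm_lt p hx)]
    exact (integrable_comp_sub_left _ x).2
      ((integrable_indicator_iff measurableSet_ball.compl).2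
        (integrableOn_compl_ball_rpow_norm_sub hp hx))
  · rw [funext (fracLapBallIntegrand_of_one_lt_norm p hx)]
    exact (integrable_comp_sub_left (fun w => -_) x).2
      ((integrable_indicator_iff measurableSet_ball).2 (integrableOn_ball_rpow_norm_sub p hx)).neg

theorem fracLapBall_of_norm_lt (p : ℝ) {x : E} (hx : ‖x‖ < 1) :
    fracLapBall p x = ∫ z in (ball (0 : E) 1)ᶜ, ‖x - z‖ ^ p := by
  rw [fracLapBall, funext (fracLapBallIntegrand_of_norm_lt p hx), integral_sub_left_eq_self,
    integral_indicator measurableSet_ball.compl]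

theorem fracLapBall_of_one_lt_norm (p : ℝ) {x : E} (hx : 1 < ‖x‖) :
    fracLapBall p x = -∫ z in ball (0 : E) 1, ‖x - z‖ ^ p := by
  rw [fracLapBall, funext (fracLapBallIntegrand_of_one_lt_norm p hx),
    integral_sub_left_eq_self (fun w => -_), integral_neg, integral_indicator measurableSet_ball]

theorem fracLapBall_eq_of_norm_eq (p : ℝ) {x x' : E} (h : ‖x‖ = ‖x'‖) :
    fracLapBall p x = fracLapBall p x' := by
  set e := (ℝ ∙ (x - x'))ᗮ.reflection
  have he : ∀ y, fracLapBallIntegrand p (e x) (e y) = fracLapBallIntegrand p x y := fun y => by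
    have hind : ∀ z, (ball (0 : E) 1).indicator (fun _ => (1 : ℝ)) (e z) =
        (ball (0 : E) 1).indicator (fun _ => (1 : ℝ)) z := fun z => by
      by_cases hz : z ∈ ball (0 : E) 1 <;> simp_all
    rw [fracLapBallIntegrand, fracLapBallIntegrand, ← map_sub, hind, hind, e.norm_map]
  calc fracLapBall p x = ∫ y, fracLapBallIntegrand p (e x) (e y) := by simp_rw [he]; rfl
    _ = fracLapBall p (e x) :=
      e.measurePreserving.integral_comp e.toHomeomorph.measurableEmbedding _
    _ = fracLapBall p x' := by rw [Submodule.reflection_sub h]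

theorem fracLapBall_pos [Nontrivial E] {p : ℝ} (hp : p < -Module.finrank ℝ E) {x : E}
    (hx : ‖x‖ < 1) : 0 < fracLapBall p x := by
  rw [fracLapBall_of_norm_lt p hx]
  exact setIntegral_compl_ball_rpow_norm_sub_pos hp hx

theorem fracLapBall_neg (p : ℝ) {x : E} (hx : 1 < ‖x‖) : fracLapBall p x < 0 := by
  rw [fracLapBall_of_one_lt_norm p hx, neg_lt_zero]
  exact setIntegral_ball_rpow_norm_sub_pos p hx

theorem fracLapBall_lt_of_lt_one {p : ℝ} (hp : p < -Module.finrank ℝ E) {x y : E}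
    (hxy : ‖x‖ < ‖y‖) (hy : ‖y‖ < 1) : fracLapBall p x < fracLapBall p y := by
  refine lt_of_norm_lt_of_radial (I := Ico 0 1) (fun _ _ => fracLapBall_eq_of_norm_eq p)
    (fun v hv r hr s hs hrs => ?_) ⟨norm_nonneg x, hxy.trans hy⟩ ⟨norm_nonneg y, hy⟩ hxy
  rw [fracLapBall_of_norm_lt p (by rw [norm_smul_of_norm_eq_one hv hr.1]; exact hr.2),
    fracLapBall_of_norm_lt p (by rw [norm_smul_of_norm_eq_one hv hs.1]; exact hs.2)]
  exact setIntegral_compl_ball_rpow_norm_smul_sub_lt hp hv hr.1 hrs hs.2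

theorem fracLapBall_lt_of_one_lt {p : ℝ} (hp : p < 0) {x y : E} (hx : 1 < ‖x‖) (hxy : ‖x‖ < ‖y‖) :
    fracLapBall p x < fracLapBall p y := by
  refine lt_of_norm_lt_of_radial (I := Ioi 1) (fun _ _ => fracLapBall_eq_of_norm_eq p)
    (fun v hv r hr s hs hrs => ?_) hx (hx.trans hxy) hxy
  have hr' : (1 : ℝ) < r := hr
  rw [fracLapBall_of_one_lt_norm p (by rwa [norm_smul_of_norm_eq_one hv (by linarith)]),
    fracLapBall_of_one_lt_norm p (by rw [norm_smul_of_norm_eq_one hv (by linarith)]; linarith),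
    neg_lt_neg_iff]
  exact setIntegral_ball_rpow_norm_smul_sub_lt hp hv hr' hrs

end

theorem fracLap_indicator_ball_props_general (d : ℕ) (α : ℝ) (hα : α ∈ Set.Ioo (0:ℝ) 2)
    (j : EuclideanSpace ℝ (Fin d) → ℝ)
    (hj : ∀ x : EuclideanSpace ℝ (Fin d), ‖x‖ ≠ 1 →
      j x = fracLapConst d α *
        ∫ y : EuclideanSpace ℝ (Fin d),
          ((Metric.ball (0 : EuclideanSpace ℝ (Fin d)) 1).indicator (fun _ => (1:ℝ)) x -
            (Metric.ball (0 : EuclideanSpace ℝ (Fin d)) 1).indicator (fun _ => (1:ℝ)) (x - y)) *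
          ‖y‖ ^ (-(d : ℝ) - α)) :
    (∀ x : EuclideanSpace ℝ (Fin d), ‖x‖ ≠ 1 →
      Integrable (fun y : EuclideanSpace ℝ (Fin d) =>
        ((Metric.ball (0 : EuclideanSpace ℝ (Fin d)) 1).indicator (fun _ => (1:ℝ)) x -
          (Metric.ball (0 : EuclideanSpace ℝ (Fin d)) 1).indicator (fun _ => (1:ℝ)) (x - y)) *
        ‖y‖ ^ (-(d : ℝ) - α))) ∧
    (∀ x x' : EuclideanSpace ℝ (Fin d), ‖x‖ ≠ 1 → ‖x‖ = ‖x'‖ → j x = j x') ∧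
    (∀ x : EuclideanSpace ℝ (Fin d), 0 < ‖x‖ → ‖x‖ < 1 → 0 < j x) ∧
    (∀ x : EuclideanSpace ℝ (Fin d), 1 < ‖x‖ → j x < 0) ∧
    (∀ x y : EuclideanSpace ℝ (Fin d), 0 < ‖x‖ → ‖x‖ < ‖y‖ → ‖y‖ < 1 → j x < j y) ∧
    (∀ x y : EuclideanSpace ℝ (Fin d), 1 < ‖x‖ → ‖x‖ < ‖y‖ → j x < j y) := by
  have hp : -(d : ℝ) - α < -(Module.finrank ℝ (EuclideanSpace ℝ (Fin d)) : ℝ) := by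
    rw [finrank_euclideanSpace_fin]
    linarith [hα.1]
  have hA := fracLapConst_pos d hα
  have hj' : ∀ x, ‖x‖ ≠ 1 → j x = fracLapConst d α * fracLapBall (-(d : ℝ) - α) x := hj
  refine ⟨fun x hx => integrable_fracLapBallIntegrand hp hx, fun x x' hx h => ?_,
    fun x h0 h1 => ?_, fun x hx => ?_, fun x y _ hxy hy => ?_, fun x y hx hxy => ?_⟩
  · rw [hj' x hx, hj' x' (h ▸ hx), fracLapBall_eq_of_norm_eq _ h]
  · have := nontrivial_of_ne x 0 (norm_pos_iff.1 h0)
    rw [hj' x h1.ne]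
    exact mul_pos hA (fracLapBall_pos hp h1)
  · rw [hj' x hx.ne']
    exact mul_neg_of_pos_of_neg hA (fracLapBall_neg _ hx)
  · rw [hj' x (hxy.trans hy).ne, hj' y hy.ne]
    exact mul_lt_mul_of_pos_left (fracLapBall_lt_of_lt_one hp hxy hy) hA
  · rw [hj' x hx.ne', hj' y (hx.trans hxy).ne']
    exact mul_lt_mul_of_pos_left (fracLapBall_lt_of_one_lt (by linarith [hα.1]) hx hxy) hA

/-- Properties of `j = (−Δ)^{α/2} 𝟙_{B₁}`: it is radial, positive inside the ball,
negative outside, and increasing in `r` on `(0,1)` and on `(1,∞)`. -/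
theorem fracLap_indicator_ball_props (d : ℕ) (hd : 2 ≤ d) (α : ℝ) (hα : α ∈ Set.Ioo (0:ℝ) 2)
    (j : EuclideanSpace ℝ (Fin d) → ℝ)
    (hj : ∀ x : EuclideanSpace ℝ (Fin d), ‖x‖ ≠ 1 →
      j x = fracLapConst d α *
        ∫ y : EuclideanSpace ℝ (Fin d),
          ((Metric.ball (0 : EuclideanSpace ℝ (Fin d)) 1).indicator (fun _ => (1:ℝ)) x -
            (Metric.ball (0 : EuclideanSpace ℝ (Fin d)) 1).indicator (fun _ => (1:ℝ)) (x - y)) *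
          ‖y‖ ^ (-(d : ℝ) - α)) :
    (∀ x : EuclideanSpace ℝ (Fin d), ‖x‖ ≠ 1 →
      Integrable (fun y : EuclideanSpace ℝ (Fin d) =>
        ((Metric.ball (0 : EuclideanSpace ℝ (Fin d)) 1).indicator (fun _ => (1:ℝ)) x -
          (Metric.ball (0 : EuclideanSpace ℝ (Fin d)) 1).indicator (fun _ => (1:ℝ)) (x - y)) *
        ‖y‖ ^ (-(d : ℝ) - α))) ∧
    (∀ x x' : EuclideanSpace ℝ (Fin d), ‖x‖ ≠ 1 → ‖x‖ = ‖x'‖ → j x = j x') ∧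
    (∀ x : EuclideanSpace ℝ (Fin d), 0 < ‖x‖ → ‖x‖ < 1 → 0 < j x) ∧
    (∀ x : EuclideanSpace ℝ (Fin d), 1 < ‖x‖ → j x < 0) ∧
    (∀ x y : EuclideanSpace ℝ (Fin d), 0 < ‖x‖ → ‖x‖ < ‖y‖ → ‖y‖ < 1 → j x < j y) ∧
    (∀ x y : EuclideanSpace ℝ (Fin d), 1 < ‖x‖ → ‖x‖ < ‖y‖ → j x < j y) :=
  fracLap_indicator_ball_props_general d α hα j hj
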